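/- arXiv:1301.7326 — 7 statements merged into one kernel-verified Lean document; each statement's English description precedes it below -/
import Mathlib

section
/- Let X be a uniformly convex Banach space, {x_n} and {y_n} sequences in X, and φ a nonzero bounded linear functional on X. If for some d ≥ 0, ‖x_n‖ → d and ‖y_n‖ → d, and |φ(x_n + y_n)| → 2d‖φ‖, then ‖x_n − y_n‖ → 0. -/
/-!
Since `‖φ (x n + y n)‖ ≤ ‖φ‖ ‖x n + y n‖ ≤ ‖φ‖ (‖x n‖ + ‖y n‖)`, the hypothesis forces
`‖x n + y n‖ → 2d`. Dividing both sequences by `max ‖x n‖ ‖y n‖` gives sequences `u n`, `v n`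
in the unit ball with `‖u n + v n‖ → 2`, and uniform convexity then makes `‖u n - v n‖ → 0`.
-/

open Filter Topology

theorem tendsto_norm_of_tendsto_norm_apply {𝕜 E F ι : Type*} [NontriviallyNormedField 𝕜]
    [NormedAddCommGroup E] [NormedSpace 𝕜 E] [NormedAddCommGroup F] [NormedSpace 𝕜 F]
    {φ : E →L[𝕜] F} (hφ : φ ≠ 0) {l : Filter ι} {z : ι → E} {a : ι → ℝ} {c : ℝ}
    (hz : ∀ i, ‖z i‖ ≤ a i) (ha : Tendsto a l (𝓝 c))
    (hφz : Tendsto (fun i => ‖φ (z i)‖) l (𝓝 (c * ‖φ‖))) :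
    Tendsto (fun i => ‖z i‖) l (𝓝 c) := by
  have hφ_pos : 0 < ‖φ‖ := norm_pos_iff.2 hφ
  refine tendsto_of_tendsto_of_tendsto_of_le_of_le (g := fun i => ‖φ (z i)‖ / ‖φ‖)
    ?_ ha (fun i => ?_) hz
  · simpa [hφ_pos.ne'] using hφz.div_const ‖φ‖
  · exact div_le_of_le_mul₀ (norm_nonneg _) (norm_nonneg _)
      ((φ.le_opNorm _).trans_eq (mul_comm _ _))

section UniformConvex

variable {E ι : Type*} [NormedAddCommGroup E] [NormedSpace ℝ E] [UniformConvexSpace E]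
  {l : Filter ι} {u v x y : ι → E} {d : ℝ}

theorem tendsto_norm_sub_of_norm_le_one (hu : ∀ i, ‖u i‖ ≤ 1) (hv : ∀ i, ‖v i‖ ≤ 1)
    (huv : Tendsto (fun i => ‖u i + v i‖) l (𝓝 2)) :
    Tendsto (fun i => ‖u i - v i‖) l (𝓝 0) := by
  refine tendsto_order.2 ⟨fun a ha => .of_forall fun i => ha.trans_le (norm_nonneg _),
    fun ε hε => ?_⟩
  obtain ⟨δ, hδ, hclose⟩ := exists_forall_closed_ball_dist_add_le_two_sub E hε
  filter_upwards [huv.eventually (eventually_gt_nhds (sub_lt_self 2 hδ))] with i hi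
  by_contra! hfar
  exact (hclose (hu i) (hv i) hfar).not_gt hi

theorem tendsto_norm_sub_of_tendsto_norm_add (hd : 0 ≤ d)
    (hx : Tendsto (fun i => ‖x i‖) l (𝓝 d))
    (hy : Tendsto (fun i => ‖y i‖) l (𝓝 d))
    (hxy : Tendsto (fun i => ‖x i + y i‖) l (𝓝 (2 * d))) :
    Tendsto (fun i => ‖x i - y i‖) l (𝓝 0) := by
  rcases hd.eq_or_lt with rfl | hd
  · refine squeeze_zero (fun i => norm_nonneg _) (fun i => norm_sub_le _ _) ?_
    simpa using hx.add hy
  set r := fun i => max ‖x i‖ ‖y i‖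
  have hr : Tendsto r l (𝓝 d) := by simpa using hx.max hy
  have hr_pos : ∀ᶠ i in l, 0 < r i := hr.eventually (eventually_gt_nhds hd)
  have hr_nonneg (i : ι) : 0 ≤ r i := le_max_of_le_left (norm_nonneg _)
  have hnorm_le (i : ι) {z : E} (hz : ‖z‖ ≤ r i) : ‖(r i)⁻¹ • z‖ ≤ 1 := by
    rw [norm_smul, norm_inv, Real.norm_of_nonneg (hr_nonneg i)]
    exact inv_mul_le_one_of_le₀ hz (hr_nonneg i)
  have hsum : Tendsto (fun i => ‖(r i)⁻¹ • x i + (r i)⁻¹ • y i‖) l (𝓝 2) := by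
    have hlim : d⁻¹ * (2 * d) = 2 := by field_simp
    convert (hr.inv₀ hd.ne').mul hxy using 2 with i
    · rw [← smul_add, norm_smul, norm_inv, Real.norm_of_nonneg (hr_nonneg i)]
    · exact hlim.symm
  have hdiff := tendsto_norm_sub_of_norm_le_one (fun i => hnorm_le i (le_max_left _ _))
    (fun i => hnorm_le i (le_max_right _ _)) hsum
  refine (mul_zero d ▸ hr.mul hdiff).congr' ?_
  filter_upwards [hr_pos] with i hi
  rw [← smul_sub, norm_smul, Real.norm_of_nonneg (inv_nonneg.2 hi.le),
    mul_inv_cancel_left₀ hi.ne']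

end UniformConvex

theorem uc_sequence2_general
    {X : Type*} [NormedAddCommGroup X] [NormedSpace ℂ X]
    [UniformConvexSpace X]
    (x y : ℕ → X) (φ : X →L[ℂ] ℂ) (hφ : φ ≠ 0) (d : ℝ) (hd : 0 ≤ d)
    (hx : Filter.Tendsto (fun n => ‖x n‖) Filter.atTop (nhds d))
    (hy : Filter.Tendsto (fun n => ‖y n‖) Filter.atTop (nhds d))
    (hxy : Filter.Tendsto (fun n => ‖φ (x n + y n)‖) Filter.atTop
      (nhds (2 * d * ‖φ‖))) :
    Filter.Tendsto (fun n => ‖x n - y n‖) Filter.atTop (nhds 0) := by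
  have hsum : Tendsto (fun n => ‖x n + y n‖) atTop (𝓝 (2 * d)) :=
    tendsto_norm_of_tendsto_norm_apply hφ (fun n => norm_add_le _ _)
      (two_mul d ▸ hx.add hy) hxy
  exact tendsto_norm_sub_of_tendsto_norm_add hd hx hy hsum

theorem uc_sequence2
    {X : Type*} [NormedAddCommGroup X] [NormedSpace ℂ X]
    [UniformConvexSpace X] [CompleteSpace X]
    (x y : ℕ → X) (φ : X →L[ℂ] ℂ) (hφ : φ ≠ 0) (d : ℝ) (hd : 0 ≤ d)
    (hx : Filter.Tendsto (fun n => ‖x n‖) Filter.atTop (nhds d))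
    (hy : Filter.Tendsto (fun n => ‖y n‖) Filter.atTop (nhds d))
    (hxy : Filter.Tendsto (fun n => ‖φ (x n + y n)‖) Filter.atTop
      (nhds (2 * d * ‖φ‖))) :
    Filter.Tendsto (fun n => ‖x n - y n‖) Filter.atTop (nhds 0) :=
  uc_sequence2_general x y φ hφ d hd hx hy hxy
end

section
/- Let X be a uniformly convex Banach space and {φ_n} a sequence of nonzero functionals in X* with φ_n → φ ≠ 0 in operator norm. If x̂_n is the unique element with ‖x̂_n‖ = 1 and φ_n(x̂_n) = ‖φ_n‖, and x̂ is the corresponding extremal element for φ, then x̂_n → x̂ in norm. -/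
theorem extremal_element_continuity
    {X : Type*} [NormedAddCommGroup X] [NormedSpace ℂ X]
    [UniformConvexSpace X] [CompleteSpace X]
    (φn : ℕ → (X →L[ℂ] ℂ)) (φ : X →L[ℂ] ℂ)
    (hφn : ∀ n, φn n ≠ 0) (hφ : φ ≠ 0)
    (hconv : Filter.Tendsto φn Filter.atTop (nhds φ))
    (xhatn : ℕ → X) (xhat : X)
    (hxhatn : ∀ n, ‖xhatn n‖ = 1 ∧ φn n (xhatn n) = (‖φn n‖ : ℂ))
    (hxhat : ‖xhat‖ = 1 ∧ φ xhat = (‖φ‖ : ℂ)) :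
    Filter.Tendsto xhatn Filter.atTop (nhds xhat) := by
  have hφpos : 0 < ‖φ‖ := norm_pos_iff.mpr hφ
  -- key lower bound
  have key : ∀ n, 2 * ‖φ‖ - 2 * ‖φ - φn n‖ ≤ ‖φ‖ * ‖xhatn n + xhat‖ := by
    intro n
    have h1 : ‖φ (xhatn n + xhat)‖ ≤ ‖φ‖ * ‖xhatn n + xhat‖ := φ.le_opNorm _
    have h2 : (φ (xhatn n + xhat)).re ≤ ‖φ (xhatn n + xhat)‖ := Complex.re_le_norm _
    have h3 : φ (xhatn n) = φn n (xhatn n) + (φ - φn n) (xhatn n) := by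
      simp
    have h4 : ‖(φ - φn n) (xhatn n)‖ ≤ ‖φ - φn n‖ := by
      calc ‖(φ - φn n) (xhatn n)‖ ≤ ‖φ - φn n‖ * ‖xhatn n‖ := (φ - φn n).le_opNorm _
        _ = ‖φ - φn n‖ := by rw [(hxhatn n).1, mul_one]
    have h5 : -‖φ - φn n‖ ≤ ((φ - φn n) (xhatn n)).re := by
      have := neg_abs_le ((φ - φn n) (xhatn n)).re
      have habs : |((φ - φn n) (xhatn n)).re| ≤ ‖(φ - φn n) (xhatn n)‖ :=
        Complex.abs_re_le_norm _
      linarith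
    have h6 : ‖φ‖ - ‖φ - φn n‖ ≤ ‖φn n‖ := by
      have := norm_sub_norm_le φ (φn n)
      linarith
    have h7 : (φ (xhatn n)).re = ‖φn n‖ + ((φ - φn n) (xhatn n)).re := by
      rw [h3]; simp [(hxhatn n).2]
    have h8 : (φ (xhatn n + xhat)).re = (φ (xhatn n)).re + ‖φ‖ := by
      rw [map_add]
      simp [hxhat.2]
    have : 2 * ‖φ‖ - 2 * ‖φ - φn n‖ ≤ (φ (xhatn n + xhat)).re := by
      rw [h8, h7]; linarith
    linarith
  have hnormconv : Filter.Tendsto (fun n => ‖φ - φn n‖) Filter.atTop (nhds 0) := by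
    have h := ((tendsto_const_nhds : Filter.Tendsto (fun _ : ℕ => φ) Filter.atTop (nhds φ)).sub hconv).norm
    simpa using h
  rw [Metric.tendsto_atTop]
  intro ε hε
  obtain ⟨δ, hδ, hu⟩ := exists_forall_sphere_dist_add_le_two_sub X (half_pos hε)
  have hev : ∀ᶠ n in Filter.atTop, ‖φ - φn n‖ < δ * ‖φ‖ / 2 := by
    have : (0 : ℝ) < δ * ‖φ‖ / 2 := by positivity
    exact (hnormconv.eventually (eventually_lt_nhds this))
  rw [Filter.eventually_atTop] at hev
  obtain ⟨N, hN⟩ := hev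
  refine ⟨N, fun n hn => ?_⟩
  have hsmall := hN n hn
  have hlow : ‖φ‖ * (2 - δ) < ‖φ‖ * ‖xhatn n + xhat‖ := by
    have := key n
    nlinarith
  have hsum : 2 - δ < ‖xhatn n + xhat‖ := lt_of_mul_lt_mul_left hlow hφpos.le
  by_contra hcon
  push_neg at hcon
  rw [dist_eq_norm] at hcon
  have := hu (hxhatn n).1 hxhat.1 (by linarith)
  linarith
end

section
/- Let X be a uniformly convex Banach space and {φ_n} nonzero functionals in X* with φ_n → φ ≠ 0. If x̃_n is the unique minimal-norm element with φ_n(x̃_n) = 1, and x̃ is the minimal-norm element with φ(x̃) = 1, then x̃_n → x̃ in norm. -/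
/-!
The minimal-norm solution `x` of `ψ x = 1` satisfies `‖x‖ * ‖ψ z‖ ≤ ‖z‖` for every `z`,
hence `‖x‖ = ‖ψ‖⁻¹`. So `‖x̃ₙ‖ = ‖φₙ‖⁻¹ → ‖φ‖⁻¹ = ‖x̃‖`, and since `φ x̃ₙ → 1`, the same
inequality for `φ` gives `‖x̃ₙ + x̃‖ ≥ ‖x̃‖ ‖φ x̃ₙ + 1‖ → 2 ‖x̃‖`. In a uniformly convex space,
`‖x̃ₙ‖ → ‖x̃‖` together with `‖x̃ₙ + x̃‖ → 2 ‖x̃‖` forces `x̃ₙ → x̃`.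
-/

open Filter Topology

section UniformConvex

variable {ι E : Type*} {l : Filter ι}

theorem tendsto_sub_nhds_zero_of_norm_le_of_tendsto_norm_add [SeminormedAddCommGroup E]
    [NormedSpace ℝ E] [UniformConvexSpace E] {x y : ι → E} {r : ℝ}
    (hx : ∀ i, ‖x i‖ ≤ r) (hy : ∀ i, ‖y i‖ ≤ r)
    (hxy : Tendsto (fun i => ‖x i + y i‖) l (𝓝 (2 * r))) :
    Tendsto (fun i => x i - y i) l (𝓝 0) := by
  refine NormedAddGroup.tendsto_nhds_zero.2 fun ε hε => ?_
  obtain ⟨δ, hδ, hconvex⟩ := exists_forall_closed_ball_dist_add_le_two_mul_sub E hε r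
  filter_upwards [hxy.eventually (eventually_gt_nhds (sub_lt_self _ hδ))] with i hi
  by_contra! hfar
  exact (hconvex (hx i) (hy i) hfar).not_gt hi

theorem tendsto_of_tendsto_norm_of_tendsto_norm_add [NormedAddCommGroup E] [NormedSpace ℝ E]
    [UniformConvexSpace E] {x : ι → E} {y : E}
    (hx : Tendsto (fun i => ‖x i‖) l (𝓝 ‖y‖))
    (hxy : Tendsto (fun i => ‖x i + y‖) l (𝓝 (2 * ‖y‖))) :
    Tendsto x l (𝓝 y) := by
  rcases eq_or_ne y 0 with rfl | hy
  · exact tendsto_zero_iff_norm_tendsto_zero.2 (by simpa using hx)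
  have hy : 0 < ‖y‖ := norm_pos_iff.2 hy
  -- Shrink `x i` and `y` by a common factor so that both lie in the ball of radius `‖y‖`.
  set c : ι → ℝ := fun i => ‖y‖ / max ‖x i‖ ‖y‖
  have hmax : ∀ i, 0 < max ‖x i‖ ‖y‖ := fun i => hy.trans_le (le_max_right _ _)
  have hc_pos : ∀ i, 0 < c i := fun i => div_pos hy (hmax i)
  have hc_norm : ∀ i (z : E), ‖z‖ ≤ max ‖x i‖ ‖y‖ → ‖c i • z‖ ≤ ‖y‖ := fun i z hz => by
    rw [norm_smul_of_nonneg (hc_pos i).le, div_mul_eq_mul_div, div_le_iff₀ (hmax i)]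
    gcongr
  have hc : Tendsto c l (𝓝 1) := by
    have := (tendsto_const_nhds (x := ‖y‖)).div (hx.max tendsto_const_nhds)
      (max_self ‖y‖ ▸ hy.ne')
    rwa [max_self, div_self hy.ne'] at this
  have hshrunk : Tendsto (fun i => c i • x i - c i • y) l (𝓝 0) := by
    refine tendsto_sub_nhds_zero_of_norm_le_of_tendsto_norm_add
      (fun i => hc_norm i _ (le_max_left _ _)) (fun i => hc_norm i _ (le_max_right _ _)) ?_
    simpa [← smul_add, norm_smul_of_nonneg (hc_pos _).le] using hc.mul hxy
  rw [← tendsto_sub_nhds_zero_iff]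
  simpa [← smul_sub, inv_smul_smul₀ (hc_pos _).ne'] using (hc.inv₀ one_ne_zero).smul hshrunk

end UniformConvex

theorem ContinuousLinearMap.tendsto_apply_sub_apply {ι 𝕜 E F : Type*} {l : Filter ι}
    [NontriviallyNormedField 𝕜] [SeminormedAddCommGroup E] [NormedSpace 𝕜 E]
    [SeminormedAddCommGroup F] [NormedSpace 𝕜 F] {f : ι → E →L[𝕜] F} {g : E →L[𝕜] F}
    (hf : Tendsto f l (𝓝 g)) {x : ι → E} {r : ℝ} (hx : Tendsto (fun i => ‖x i‖) l (𝓝 r)) :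
    Tendsto (fun i => f i (x i) - g (x i)) l (𝓝 0) := by
  have hbound := (tendsto_iff_norm_sub_tendsto_zero.1 hf).mul hx
  refine squeeze_zero_norm (fun i => ?_) (by simpa using hbound)
  rw [← ContinuousLinearMap.sub_apply']
  exact (f i - g).le_opNorm (x i)

section MinNorm

variable {𝕜 E : Type*} [NontriviallyNormedField 𝕜] [SeminormedAddCommGroup E] [NormedSpace 𝕜 E]

def IsMinNormSolution (ψ : E →L[𝕜] 𝕜) (x : E) : Prop :=
  ψ x = 1 ∧ ∀ y : E, ψ y = 1 → ‖x‖ ≤ ‖y‖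

namespace IsMinNormSolution

variable {ψ : E →L[𝕜] 𝕜} {x : E}

theorem norm_mul_norm_apply_le (h : IsMinNormSolution ψ x) (z : E) : ‖x‖ * ‖ψ z‖ ≤ ‖z‖ := by
  rcases eq_or_ne (ψ z) 0 with hz | hz
  · simp [hz]
  have hscaled : ψ ((ψ z)⁻¹ • z) = 1 := by simp [hz]
  have := h.2 _ hscaled
  rwa [norm_smul, norm_inv, ← div_eq_inv_mul, le_div_iff₀ (norm_pos_iff.2 hz)] at this

theorem norm_eq_inv_opNorm (h : IsMinNormSolution ψ x) : ‖x‖ = ‖ψ‖⁻¹ := by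
  have hle : ‖ψ‖ * ‖x‖ ≤ 1 := by
    rcases (norm_nonneg x).eq_or_lt with hx | hx
    · simp [← hx]
    rw [← le_div_iff₀ hx]
    refine ψ.opNorm_le_bound (by positivity) fun z => ?_
    rw [div_mul_eq_mul_div, one_mul, le_div_iff₀' hx]
    exact h.norm_mul_norm_apply_le z
  have hge : 1 ≤ ‖ψ‖ * ‖x‖ := by simpa [h.1] using ψ.le_opNorm x
  exact eq_inv_of_mul_eq_one_right (le_antisymm hle hge)

end IsMinNormSolution

end MinNorm

theorem min_norm_element_continuity_general
    {X : Type*} [NormedAddCommGroup X] [NormedSpace ℂ X]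
    [UniformConvexSpace X]
    (φn : ℕ → (X →L[ℂ] ℂ)) (φ : X →L[ℂ] ℂ)
    (hconv : Filter.Tendsto φn Filter.atTop (nhds φ))
    (xtiln : ℕ → X) (xtil : X)
    (hxtiln : ∀ n, φn n (xtiln n) = 1 ∧ ∀ y : X, φn n y = 1 → ‖xtiln n‖ ≤ ‖y‖)
    (hxtil : φ xtil = 1 ∧ ∀ y : X, φ y = 1 → ‖xtil‖ ≤ ‖y‖) :
    Filter.Tendsto xtiln Filter.atTop (nhds xtil) := by
  have hxtiln : ∀ n, IsMinNormSolution (φn n) (xtiln n) := hxtiln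
  have hxtil : IsMinNormSolution φ xtil := hxtil
  have hφ : ‖φ‖ ≠ 0 := norm_ne_zero_iff.2 fun h => by simpa [h] using hxtil.1
  have hnorm : Tendsto (fun n => ‖xtiln n‖) atTop (𝓝 ‖xtil‖) := by
    simpa only [fun n => (hxtiln n).norm_eq_inv_opNorm, hxtil.norm_eq_inv_opNorm] using
      hconv.norm.inv₀ hφ
  have happly : Tendsto (fun n => φ (xtiln n)) atTop (𝓝 1) := by
    simpa [(hxtiln _).1] using
      ((ContinuousLinearMap.tendsto_apply_sub_apply hconv hnorm).const_sub 1)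
  have hadd : Tendsto (fun n => ‖xtiln n + xtil‖) atTop (𝓝 (2 * ‖xtil‖)) := by
    refine tendsto_of_tendsto_of_tendsto_of_le_of_le (g := fun n => ‖xtil‖ * ‖φ (xtiln n) + 1‖)
      ?_ (by simpa [two_mul] using hnorm.add_const ‖xtil‖) (fun n => ?_) (fun n => norm_add_le _ _)
    · simpa [mul_comm, one_add_one_eq_two] using ((happly.add_const 1).norm.const_mul ‖xtil‖)
    · simpa [hxtil.1] using hxtil.norm_mul_norm_apply_le (xtiln n + xtil)
  exact tendsto_of_tendsto_norm_of_tendsto_norm_add hnorm hadd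

theorem min_norm_element_continuity
    {X : Type*} [NormedAddCommGroup X] [NormedSpace ℂ X]
    [UniformConvexSpace X] [CompleteSpace X]
    (φn : ℕ → (X →L[ℂ] ℂ)) (φ : X →L[ℂ] ℂ)
    (hφn : ∀ n, φn n ≠ 0) (hφ : φ ≠ 0)
    (hconv : Filter.Tendsto φn Filter.atTop (nhds φ))
    (xtiln : ℕ → X) (xtil : X)
    (hxtiln : ∀ n, φn n (xtiln n) = 1 ∧ ∀ y : X, φn n y = 1 → ‖xtiln n‖ ≤ ‖y‖)
    (hxtil : φ xtil = 1 ∧ ∀ y : X, φ y = 1 → ‖xtil‖ ≤ ‖y‖) :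
    Filter.Tendsto xtiln Filter.atTop (nhds xtil) :=
  min_norm_element_continuity_general φn φ hconv xtiln xtil hxtiln hxtil
end

section
/- Every quotient of a uniformly convex Banach space by a closed subspace is uniformly convex. -/
theorem quotient_uniformly_convex
    {X : Type*} [NormedAddCommGroup X] [NormedSpace ℝ X]
    [UniformConvexSpace X] [CompleteSpace X]
    (Y : Submodule ℝ X) (hY : IsClosed (Y : Set X)) :
    UniformConvexSpace (X ⧸ Y) := by
  constructor
  intro ε hε
  obtain ⟨δ, hδ, H⟩ := exists_forall_closed_ball_dist_add_le_two_sub X (half_pos hε)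
  -- choose α = min (δ/4) 1
  set α : ℝ := min (δ / 4) 1 with hα
  have hα0 : 0 < α := lt_min (by linarith) one_pos
  have hα1 : α ≤ 1 := min_le_right _ _
  refine ⟨δ / 2, by linarith, ?_⟩
  intro ξ hξ η hη hεd
  replace hξ : ‖ξ‖ ≤ 1 := hξ.le
  replace hη : ‖η‖ ≤ 1 := hη.le
  obtain ⟨x, hxmk, hxn⟩ := Submodule.Quotient.norm_mk_lt ξ hα0
  obtain ⟨y, hymk, hyn⟩ := Submodule.Quotient.norm_mk_lt η hα0
  have hx1 : ‖x‖ ≤ 1 + α := by linarith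
  have hy1 : ‖y‖ ≤ 1 + α := by linarith
  have h1α : (0:ℝ) < 1 + α := by linarith
  -- scaled vectors
  set x' : X := (1 + α)⁻¹ • x
  set y' : X := (1 + α)⁻¹ • y
  have hx' : ‖x'‖ ≤ 1 := by
    rw [norm_smul, norm_inv, Real.norm_of_nonneg h1α.le, inv_mul_le_iff₀ h1α, mul_one]
    exact hx1
  have hy' : ‖y'‖ ≤ 1 := by
    rw [norm_smul, norm_inv, Real.norm_of_nonneg h1α.le, inv_mul_le_iff₀ h1α, mul_one]
    exact hy1
  have hxy : ε ≤ ‖x - y‖ := by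
    calc ε ≤ ‖ξ - η‖ := hεd
    _ ≤ ‖x - y‖ := by
        rw [← hxmk, ← hymk, ← Submodule.Quotient.mk_sub]
        exact Submodule.Quotient.norm_mk_le Y _
  have hxy' : ε / 2 ≤ ‖x' - y'‖ := by
    have : ‖x' - y'‖ = (1 + α)⁻¹ * ‖x - y‖ := by
      rw [← smul_sub, norm_smul, norm_inv, Real.norm_of_nonneg h1α.le]
    rw [this, le_inv_mul_iff₀ h1α]
    calc (1 + α) * (ε / 2) ≤ 2 * (ε / 2) := by nlinarith
    _ = ε := by ring
    _ ≤ ‖x - y‖ := hxy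
  have key : ‖x' + y'‖ ≤ 2 - δ := H hx' hy' hxy'
  have hδ2 : δ ≤ 2 := by
    by_contra h
    push_neg at h
    have : (0:ℝ) ≤ ‖x' + y'‖ := norm_nonneg _
    linarith
  have hsum : ‖x + y‖ ≤ (1 + α) * (2 - δ) := by
    have : ‖x + y‖ = (1 + α) * ‖x' + y'‖ := by
      have : x + y = (1 + α) • (x' + y') := by
        rw [smul_add]
        simp only [x', y', smul_smul, mul_inv_cancel₀ h1α.ne', one_smul]
      rw [this, norm_smul, Real.norm_of_nonneg h1α.le]
    rw [this]
    exact mul_le_mul_of_nonneg_left key h1α.le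
  calc ‖ξ + η‖ ≤ ‖x + y‖ := by
        rw [← hxmk, ← hymk, ← Submodule.Quotient.mk_add]
        exact Submodule.Quotient.norm_mk_le Y _
  _ ≤ (1 + α) * (2 - δ) := hsum
  _ ≤ 2 - δ / 2 := by
      have hα4 : α ≤ δ / 4 := min_le_left _ _
      nlinarith
end

section
/- Let X be a Banach space with uniformly convex dual, S a closed subspace, x_n ∈ S with x_n → x ≠ 0, and let φ_n ∈ S* be the unique functional such that x_n solves the minimal-norm problem φ_n(y) = 1, ‖x_n‖ minimal, over S (and similarly φ for x). Then φ_n → φ in S*. -/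
/-!
Rescale the minimal-norm functionals to norming functionals `‖xₙ‖ • φₙ` of norm at most `1` and
extend them to `X` by Hahn–Banach. Testing against `x`, the sum of the `n`-th extension and the
limit one has norm tending to `2`, so uniform convexity of `X*` forces the extensions to converge;
restricting back to `S` and undoing the rescaling gives `φₙ → φ`.
-/

open Filter Topology

theorem UniformConvexSpace.tendsto_of_norm_add_tendsto_two {E ι : Type*}
    [NormedAddCommGroup E] [NormedSpace ℝ E] [UniformConvexSpace E] {l : Filter ι}
    {u : ι → E} {v : E} (hu : ∀ i, ‖u i‖ ≤ 1) (hv : ‖v‖ ≤ 1)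
    (h : Tendsto (fun i => ‖u i + v‖) l (𝓝 2)) : Tendsto u l (𝓝 v) := by
  refine Metric.tendsto_nhds.2 fun ε hε => ?_
  obtain ⟨δ, hδ, hconv⟩ := exists_forall_closed_ball_dist_add_le_two_sub E hε
  filter_upwards [h.eventually (lt_mem_nhds (sub_lt_self 2 hδ))] with i hi
  rw [dist_eq_norm]
  by_contra! hfar
  exact (hconv (hu i) hv hfar).not_gt hi

section

variable {𝕜 E ι : Type*} [RCLike 𝕜] [NormedAddCommGroup E] [NormedSpace 𝕜 E] {l : Filter ι}

theorem ContinuousLinearMap.norm_le_inv_norm_of_forall_norm_le {ψ : StrongDual 𝕜 E} {z : E}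
    (hz : z ≠ 0) (hmin : ∀ y, ψ y = 1 → ‖z‖ ≤ ‖y‖) : ‖ψ‖ ≤ ‖z‖⁻¹ := by
  refine ψ.opNorm_le_bound (by positivity) fun y => ?_
  rcases eq_or_ne (ψ y) 0 with hy | hy
  · rw [hy, norm_zero]; positivity
  have hscaled : ‖z‖ ≤ ‖ψ y‖⁻¹ * ‖y‖ := by
    simpa [norm_smul, hy] using hmin ((ψ y)⁻¹ • y) (by simp [hy])
  rw [inv_mul_eq_div, le_div_iff₀ (norm_pos_iff.2 hy)] at hscaled
  rw [inv_mul_eq_div, le_div_iff₀ (norm_pos_iff.2 hz)]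
  linarith

theorem tendsto_apply_of_tendsto_of_norm_le_one {u : ι → StrongDual 𝕜 E} {z : ι → E} {w : E}
    (hu : ∀ i, ‖u i‖ ≤ 1) (hz : Tendsto z l (𝓝 w)) (huz : ∀ i, u i (z i) = ‖z i‖) :
    Tendsto (fun i => u i w) l (𝓝 (‖w‖ : 𝕜)) := by
  have herr : Tendsto (fun i => u i (w - z i)) l (𝓝 0) := by
    refine squeeze_zero_norm (fun i => ?_) (tendsto_iff_norm_sub_tendsto_zero.1 hz)
    calc ‖u i (w - z i)‖ ≤ ‖u i‖ * ‖w - z i‖ := (u i).le_opNorm _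
      _ ≤ ‖z i - w‖ := by rw [norm_sub_rev]; exact mul_le_of_le_one_left (norm_nonneg _) (hu i)
  have hnorm : Tendsto (fun i => (‖z i‖ : 𝕜)) l (𝓝 ‖w‖) :=
    (RCLike.continuous_ofReal.tendsto _).comp hz.norm
  simpa [huz] using hnorm.add herr

theorem tendsto_of_apply_eq_norm [UniformConvexSpace (StrongDual 𝕜 E)]
    {u : ι → StrongDual 𝕜 E} {v : StrongDual 𝕜 E} {z : ι → E} {w : E} (hw : w ≠ 0)
    (hz : Tendsto z l (𝓝 w)) (hu : ∀ i, ‖u i‖ ≤ 1) (huz : ∀ i, u i (z i) = ‖z i‖)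
    (hv : ‖v‖ ≤ 1) (hvw : v w = ‖w‖) : Tendsto u l (𝓝 v) := by
  refine UniformConvexSpace.tendsto_of_norm_add_tendsto_two hu hv ?_
  have hw' : 0 < ‖w‖ := norm_pos_iff.2 hw
  have hlower : Tendsto (fun i => ‖(u i + v) w‖ / ‖w‖) l (𝓝 2) := by
    have := ((tendsto_apply_of_tendsto_of_norm_le_one (𝕜 := 𝕜) hu hz huz).add_const (v w)).norm
    rw [hvw, ← two_mul, norm_mul, RCLike.norm_two, RCLike.norm_ofReal, abs_norm] at this
    simpa [hvw, hw'.ne'] using this.div_const ‖w‖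
  refine tendsto_of_tendsto_of_tendsto_of_le_of_le hlower tendsto_const_nhds
    (fun i => div_le_of_le_mul₀ hw'.le (norm_nonneg _) ((u i + v).le_opNorm w)) fun i => ?_
  calc ‖u i + v‖ ≤ ‖u i‖ + ‖v‖ := norm_add_le _ _
    _ ≤ 2 := by linarith [hu i]

theorem Submodule.tendsto_of_apply_eq_norm [UniformConvexSpace (StrongDual 𝕜 E)]
    (S : Submodule 𝕜 E) {u : ι → StrongDual 𝕜 S} {v : StrongDual 𝕜 S} {z : ι → S} {w : S}
    (hw : w ≠ 0) (hz : Tendsto z l (𝓝 w)) (hu : ∀ i, ‖u i‖ ≤ 1) (huz : ∀ i, u i (z i) = ‖z i‖)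
    (hv : ‖v‖ ≤ 1) (hvw : v w = ‖w‖) : Tendsto u l (𝓝 v) := by
  choose U hUu hUnorm using fun i => exists_extension_norm_eq S (u i)
  obtain ⟨V, hVv, hVnorm⟩ := exists_extension_norm_eq S v
  have hUV : Tendsto U l (𝓝 V) :=
    _root_.tendsto_of_apply_eq_norm (z := fun i => (z i : E)) (by simpa using hw)
      ((continuous_subtype_val.tendsto w).comp hz) (fun i => (hUnorm i).trans_le (hu i))
      (fun i => (hUu i _).trans (huz i)) (hVnorm.trans_le hv) ((hVv w).trans hvw)
  have hrestrict : ∀ {Φ : StrongDual 𝕜 E} {φ : StrongDual 𝕜 S}, (∀ y : S, Φ y = φ y) →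
      ContinuousLinearMap.precomp 𝕜 S.subtypeL Φ = φ := fun h => by ext y; simp [h y]
  have := ((ContinuousLinearMap.precomp 𝕜 S.subtypeL).continuous.tendsto V).comp hUV
  simpa only [Function.comp_def, hrestrict (hUu _), hrestrict hVv] using this

theorem Submodule.tendsto_of_apply_eq_one [UniformConvexSpace (StrongDual 𝕜 E)]
    (S : Submodule 𝕜 E) {φs : ι → StrongDual 𝕜 S} {φ : StrongDual 𝕜 S} {z : ι → S} {w : S}
    (hz : Tendsto z l (𝓝 w)) (hφs : ∀ i, φs i (z i) = 1) (hφsnorm : ∀ i, ‖φs i‖ ≤ ‖z i‖⁻¹)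
    (hφ : φ w = 1) (hφnorm : ‖φ‖ ≤ ‖w‖⁻¹) : Tendsto φs l (𝓝 φ) := by
  have ne_zero {ψ : StrongDual 𝕜 S} {y : S} (h : ψ y = 1) : y ≠ 0 := by
    rintro rfl; simp at h
  have scaled_norm_le {ψ : StrongDual 𝕜 S} {y : S} (h : ‖ψ‖ ≤ ‖y‖⁻¹) :
      ‖(‖y‖ : 𝕜) • ψ‖ ≤ 1 := by
    rw [norm_smul, RCLike.norm_ofReal, abs_norm]
    exact (mul_le_mul_of_nonneg_left h (norm_nonneg y)).trans mul_inv_le_one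
  have hscaled : Tendsto (fun i => (‖z i‖ : 𝕜) • φs i) l (𝓝 ((‖w‖ : 𝕜) • φ)) :=
    S.tendsto_of_apply_eq_norm (ne_zero hφ) hz (fun i => scaled_norm_le (hφsnorm i))
      (fun i => by simp [hφs i]) (scaled_norm_le hφnorm) (by simp [hφ])
  have hinv : Tendsto (fun i => (‖z i‖ : 𝕜)⁻¹) l (𝓝 (‖w‖ : 𝕜)⁻¹) :=
    ((RCLike.continuous_ofReal.tendsto _).comp hz.norm).inv₀ (by simpa using ne_zero hφ)
  have hunscale {ψ : StrongDual 𝕜 S} {y : S} (h : ψ y = 1) :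
      (‖y‖ : 𝕜)⁻¹ • (‖y‖ : 𝕜) • ψ = ψ :=
    inv_smul_smul₀ (by simpa using ne_zero h) ψ
  simpa only [hunscale (hφs _), hunscale hφ] using hinv.smul hscaled

end

theorem functional_continuity_general
    {X : Type*} [NormedAddCommGroup X] [NormedSpace ℂ X]
    [UniformConvexSpace (StrongDual ℂ X)]
    (S : Submodule ℂ X)
    (xn : ℕ → S) (x : S)
    (hxn : Filter.Tendsto xn Filter.atTop (nhds x))
    (φn : ℕ → StrongDual ℂ S) (φ : StrongDual ℂ S)
    (hφn : ∀ n, φn n (xn n) = 1 ∧ ∀ y : S, φn n y = 1 → ‖xn n‖ ≤ ‖y‖)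
    (hφ : φ x = 1 ∧ ∀ y : S, φ y = 1 → ‖x‖ ≤ ‖y‖) :
    Filter.Tendsto φn Filter.atTop (nhds φ) := by
  have norm_le {ψ : StrongDual ℂ S} {y : S} (h : ψ y = 1 ∧ ∀ y' : S, ψ y' = 1 → ‖y‖ ≤ ‖y'‖) :
      ‖ψ‖ ≤ ‖y‖⁻¹ :=
    ψ.norm_le_inv_norm_of_forall_norm_le (by rintro rfl; simpa using h.1) h.2
  exact S.tendsto_of_apply_eq_one hxn (fun n => (hφn n).1) (fun n => norm_le (hφn n)) hφ.1
    (norm_le hφ)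

theorem functional_continuity
    {X : Type*} [NormedAddCommGroup X] [NormedSpace ℂ X] [CompleteSpace X]
    [UniformConvexSpace (StrongDual ℂ X)]
    (S : Submodule ℂ X) (hS : IsClosed (S : Set X))
    (xn : ℕ → S) (x : S) (hx : x ≠ 0)
    (hxn : Filter.Tendsto xn Filter.atTop (nhds x))
    (φn : ℕ → StrongDual ℂ S) (φ : StrongDual ℂ S)
    (hφn : ∀ n, φn n (xn n) = 1 ∧ ∀ y : S, φn n y = 1 → ‖xn n‖ ≤ ‖y‖)
    (hφ : φ x = 1 ∧ ∀ y : S, φ y = 1 → ‖x‖ ≤ ‖y‖) :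
    Filter.Tendsto φn Filter.atTop (nhds φ) :=
  functional_continuity_general S xn x hxn φn φ hφn hφ
end

section
/- Let X be a uniformly convex Banach space, X₁ ⊆ X₂ ⊆ ⋯ closed subspaces with dense union, and φ ∈ X* nonzero with φ not identically zero on X₁. Let x̂_n be the unique element of X_n with ‖x̂_n‖ = 1 and φ(x̂_n) = ‖φ‖_n := sup{|φ(x)| : x ∈ X_n, ‖x‖=1}, and let x̂ be the extremal element for φ over X. Then x̂_n → x̂ in norm. -/
/-!
Let `‖φ‖ₙ` be the norm of `φ` on the unit sphere of `Xₙ`. Since the `Xₙ` increase and their union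
is dense, `‖φ‖ₙ → ‖φ‖`, i.e. `Re φ(x̂ₙ) → ‖φ‖ = Re φ(x̂)`. Then `‖φ‖ ‖x̂ₙ + x̂‖ ≥ Re φ(x̂ₙ + x̂)` forces
`‖x̂ₙ + x̂‖ → 2`, and uniform convexity turns this into `‖x̂ₙ - x̂‖ → 0`.
-/

open Filter Topology

namespace ContinuousLinearMap

variable {𝕜 E F : Type*} [RCLike 𝕜] [NormedAddCommGroup E] [NormedSpace 𝕜 E]
  [NormedAddCommGroup F] [NormedSpace 𝕜 F]

/-- The paper's `‖φ‖ₙ` when `V = Xₙ`. -/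
noncomputable def normOn (φ : E →L[𝕜] F) (V : Submodule 𝕜 E) : ℝ :=
  sSup {r : ℝ | ∃ x ∈ V, ‖x‖ = 1 ∧ ‖φ x‖ = r}

variable (φ : E →L[𝕜] F) (V : Submodule 𝕜 E)

theorem opNorm_mem_upperBounds_normOn :
    ‖φ‖ ∈ upperBounds {r : ℝ | ∃ x ∈ V, ‖x‖ = 1 ∧ ‖φ x‖ = r} := by
  rintro _ ⟨x, -, hx, rfl⟩
  simpa [hx] using φ.le_opNorm x

theorem normOn_nonneg : 0 ≤ φ.normOn V :=
  Real.sSup_nonneg (by rintro _ ⟨x, -, -, rfl⟩; exact norm_nonneg _)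

theorem normOn_le_opNorm : φ.normOn V ≤ ‖φ‖ :=
  Real.sSup_le (φ.opNorm_mem_upperBounds_normOn V) (norm_nonneg φ)

theorem norm_apply_le_normOn {x : E} (hxV : x ∈ V) (hx : ‖x‖ ≤ 1) :
    ‖φ x‖ ≤ φ.normOn V := by
  rcases eq_or_ne x 0 with rfl | hx0
  · simpa using φ.normOn_nonneg V
  calc ‖φ x‖ ≤ ‖x‖⁻¹ * ‖φ x‖ :=
        le_mul_of_one_le_left (norm_nonneg _) ((one_le_inv₀ (norm_pos_iff.2 hx0)).2 hx)
    _ = ‖φ ((‖x‖⁻¹ : 𝕜) • x)‖ := by simp [norm_smul]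
    _ ≤ φ.normOn V :=
        le_csSup ⟨_, φ.opNorm_mem_upperBounds_normOn V⟩
          ⟨_, V.smul_mem _ hxV, norm_smul_inv_norm hx0, rfl⟩

theorem tendsto_normOn_of_dense {V : ℕ → Submodule 𝕜 E} (hmono : Monotone V)
    (hdense : Dense (⋃ n, (V n : Set E))) :
    Tendsto (fun n => φ.normOn (V n)) atTop (𝓝 ‖φ‖) := by
  refine tendsto_order.2 ⟨fun r hr => ?_,
    fun r hr => .of_forall fun n => (φ.normOn_le_opNorm _).trans_lt hr⟩
  have hopen : IsOpen {z : E | ‖z‖ < 1 ∧ r < ‖φ z‖} :=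
    (isOpen_lt continuous_norm continuous_const).inter
      (isOpen_lt continuous_const (continuous_norm.comp φ.continuous))
  obtain ⟨z, hzV, hz, hrz⟩ :=
    hdense.exists_mem_open hopen (φ.exists_lt_apply_of_lt_opNorm hr)
  obtain ⟨m, hzm⟩ := Set.mem_iUnion.1 hzV
  filter_upwards [eventually_ge_atTop m] with n hn
  exact hrz.trans_le (φ.norm_apply_le_normOn _ (hmono hn hzm) hz.le)

end ContinuousLinearMap

theorem tendsto_norm_sub_of_tendsto_norm_add_s14 {E ι : Type*} [NormedAddCommGroup E]
    [NormedSpace ℝ E] [UniformConvexSpace E] {l : Filter ι} {x y : ι → E}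
    (hx : ∀ i, ‖x i‖ ≤ 1) (hy : ∀ i, ‖y i‖ ≤ 1) (h : Tendsto (fun i => ‖x i + y i‖) l (𝓝 2)) :
    Tendsto (fun i => ‖x i - y i‖) l (𝓝 0) := by
  refine Metric.tendsto_nhds.2 fun ε hε => ?_
  obtain ⟨δ, hδ, hconv⟩ := exists_forall_closed_ball_dist_add_le_two_sub E hε
  filter_upwards [h.eventually (lt_mem_nhds (by linarith : 2 - δ < 2))] with i hi
  rw [Real.dist_0_eq_abs, abs_norm]
  by_contra! hεi
  exact (hconv (hx i) (hy i) hεi).not_gt hi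

section Extremal

variable {𝕜 E ι : Type*} [RCLike 𝕜] [NormedAddCommGroup E] [NormedSpace 𝕜 E]
  {φ : E →L[𝕜] 𝕜} {l : Filter ι} {x : ι → E} {y : E}

theorem tendsto_norm_add_of_tendsto_re_apply (hφ : φ ≠ 0) (hx : ∀ i, ‖x i‖ ≤ 1)
    (hy : ‖y‖ ≤ 1) (hφy : RCLike.re (φ y) = ‖φ‖)
    (h : Tendsto (fun i => RCLike.re (φ (x i))) l (𝓝 ‖φ‖)) :
    Tendsto (fun i => ‖x i + y‖) l (𝓝 2) := by
  have hφpos : 0 < ‖φ‖ := norm_pos_iff.2 hφ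
  have hlower : ∀ i, (RCLike.re (φ (x i)) + ‖φ‖) / ‖φ‖ ≤ ‖x i + y‖ := fun i => by
    rw [div_le_iff₀ hφpos, mul_comm]
    calc RCLike.re (φ (x i)) + ‖φ‖ = RCLike.re (φ (x i + y)) := by simp [hφy]
      _ ≤ ‖φ‖ * ‖x i + y‖ := (RCLike.re_le_norm _).trans (φ.le_opNorm _)
  have hupper : ∀ i, ‖x i + y‖ ≤ 2 := fun i =>
    (norm_add_le _ _).trans (by linarith [hx i])
  have hlim : Tendsto (fun i => (RCLike.re (φ (x i)) + ‖φ‖) / ‖φ‖) l (𝓝 2) := by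
    convert (h.add_const ‖φ‖).div_const ‖φ‖ using 2
    field_simp
    ring
  exact tendsto_of_tendsto_of_tendsto_of_le_of_le hlim tendsto_const_nhds hlower hupper

theorem tendsto_of_tendsto_re_apply [NormedSpace ℝ E] [UniformConvexSpace E] (hφ : φ ≠ 0)
    (hx : ∀ i, ‖x i‖ ≤ 1) (hy : ‖y‖ ≤ 1) (hφy : RCLike.re (φ y) = ‖φ‖)
    (h : Tendsto (fun i => RCLike.re (φ (x i))) l (𝓝 ‖φ‖)) :
    Tendsto x l (𝓝 y) :=
  tendsto_iff_norm_sub_tendsto_zero.2 <| tendsto_norm_sub_of_tendsto_norm_add_s14 hx (fun _ => hy)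
    (tendsto_norm_add_of_tendsto_re_apply hφ hx hy hφy h)

end Extremal

theorem subspace_extremal_approx_general
    {X : Type*} [NormedAddCommGroup X] [NormedSpace ℂ X]
    [UniformConvexSpace X]
    (Xn : ℕ → Submodule ℂ X)
    (hmono : Monotone Xn)
    (hdense : Dense (⋃ n, (Xn n : Set X)))
    (φ : X →L[ℂ] ℂ) (hφ : φ ≠ 0)
    (xhatn : ℕ → X) (xhat : X)
    (hxhatn : ∀ n, xhatn n ∈ Xn n ∧ ‖xhatn n‖ = 1 ∧
      φ (xhatn n) = ((sSup {r : ℝ | ∃ x ∈ Xn n, ‖x‖ = 1 ∧ ‖φ x‖ = r} : ℝ) : ℂ))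
    (hxhat : ‖xhat‖ = 1 ∧ (φ xhat).re = ‖φ‖) :
    Filter.Tendsto xhatn Filter.atTop (nhds xhat) := by
  have hre : ∀ n, (φ (xhatn n)).re = φ.normOn (Xn n) := fun n => by
    rw [(hxhatn n).2.2, Complex.ofReal_re, ContinuousLinearMap.normOn]
  refine tendsto_of_tendsto_re_apply hφ (fun n => (hxhatn n).2.1.le) hxhat.1.le hxhat.2 ?_
  simpa only [RCLike.re_to_complex, hre] using φ.tendsto_normOn_of_dense hmono hdense

theorem subspace_extremal_approx
    {X : Type*} [NormedAddCommGroup X] [NormedSpace ℂ X]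
    [UniformConvexSpace X] [CompleteSpace X]
    (Xn : ℕ → Submodule ℂ X) (hclosed : ∀ n, IsClosed ((Xn n : Set X)))
    (hmono : Monotone Xn)
    (hdense : Dense (⋃ n, (Xn n : Set X)))
    (φ : X →L[ℂ] ℂ) (hφ : φ ≠ 0)
    (hφX1 : ∃ x ∈ Xn 0, φ x ≠ 0)
    (xhatn : ℕ → X) (xhat : X)
    (hxhatn : ∀ n, xhatn n ∈ Xn n ∧ ‖xhatn n‖ = 1 ∧
      φ (xhatn n) = ((sSup {r : ℝ | ∃ x ∈ Xn n, ‖x‖ = 1 ∧ ‖φ x‖ = r} : ℝ) : ℂ))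
    (hxhat : ‖xhat‖ = 1 ∧ (φ xhat).re = ‖φ‖) :
    Filter.Tendsto xhatn Filter.atTop (nhds xhat) :=
  subspace_extremal_approx_general Xn hmono hdense φ hφ xhatn xhat hxhatn hxhat
end

section
/- Let 1 ≤ q < ∞ and g ∈ H^q of the unit disc. Define G(z) = (1/z)∫₀^z g(ζ) dζ (with G(0) = g(0)). Then G ∈ H^q and ‖G‖_{H^q} ≤ ‖g‖_{H^q}. -/
/-! On the circle of radius `r`, `G(r e^{iθ}) = ∫₀¹ g(t r e^{iθ}) dt`, so Jensen's inequality gives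
`|G(r e^{iθ})|^q ≤ ∫₀¹ |g(t r e^{iθ})|^q dt`. Integrating in `θ` and exchanging the order of
integration bounds `M_q(G, r)^q` by `∫₀¹ M_q(g, t r)^q dt ≤ ‖g‖_{H^q}^q`. Holomorphy of `G` comes from
differentiating under the integral sign, with `g'` bounded on a slightly larger closed disc. -/

open MeasureTheory

/-- The integral mean `M_q(f, r)`. -/
noncomputable def intMean (q : ℝ) (f : ℂ → ℂ) (r : ℝ) : ℝ :=
  ((2 * Real.pi)⁻¹ *
    ∫ θ in (0:ℝ)..(2 * Real.pi), ‖f ((r : ℂ) * Complex.exp (θ * Complex.I))‖ ^ q) ^ (1 / q)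

/-- The set of integral means over radii 0 < r < 1. -/
noncomputable def meanSet (q : ℝ) (f : ℂ → ℂ) : Set ℝ := intMean q f '' Set.Ioo (0:ℝ) 1

/-- The Hardy space norm `sup_{0<r<1} M_q(f,r)`. -/
noncomputable def hardyNorm (q : ℝ) (f : ℂ → ℂ) : ℝ := sSup (meanSet q f)

/-- Membership in the Hardy space `H^q` of the unit disc. -/
def MemHq (q : ℝ) (f : ℂ → ℂ) : Prop :=
  DifferentiableOn ℂ f (Metric.ball (0 : ℂ) 1) ∧ BddAbove (meanSet q f)

open Set Metric
open scoped Interval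

theorem norm_integral_rpow_le_integral_norm_rpow {α E : Type*} [MeasurableSpace α]
    {μ : Measure α} [IsProbabilityMeasure μ] [NormedAddCommGroup E] [NormedSpace ℝ E] {q : ℝ}
    (hq : 1 ≤ q) {f : α → E} (hf : Integrable f μ) (hfq : Integrable (fun x => ‖f x‖ ^ q) μ) :
    ‖∫ x, f x ∂μ‖ ^ q ≤ ∫ x, ‖f x‖ ^ q ∂μ := by
  have hq0 : 0 ≤ q := zero_le_one.trans hq
  calc ‖∫ x, f x ∂μ‖ ^ q ≤ (∫ x, ‖f x‖ ∂μ) ^ q :=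
        Real.rpow_le_rpow (norm_nonneg _) (norm_integral_le_integral_norm f) hq0
    _ ≤ ∫ x, ‖f x‖ ^ q ∂μ :=
        (convexOn_rpow hq).map_integral_le (Real.continuous_rpow_const hq0).continuousOn
          isClosed_Ici (.of_forall fun x => norm_nonneg (f x)) hf.norm hfq

theorem integrable_prod_restrict_Ioc_of_continuousOn {f : ℝ → ℝ → ℝ} {a b c d : ℝ}
    (hf : ContinuousOn (Function.uncurry f) (Icc a b ×ˢ Icc c d)) :
    Integrable (Function.uncurry f)
      ((volume.restrict (Ioc a b)).prod (volume.restrict (Ioc c d))) := by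
  rw [Measure.prod_restrict, ← Measure.volume_eq_prod]
  exact (hf.integrableOn_compact (isCompact_Icc.prod isCompact_Icc)).mono_set
    (prod_mono Ioc_subset_Icc_self Ioc_subset_Icc_self)

theorem ofReal_mul_mem_ball {R t : ℝ} {z : ℂ} (ht : t ∈ Icc (0:ℝ) 1) (hz : z ∈ ball (0:ℂ) R) :
    (t : ℂ) * z ∈ ball (0:ℂ) R := by
  simpa [Complex.real_smul] using
    (convex_ball (0:ℂ) R).smul_mem_of_zero_mem (mem_ball_self ((norm_nonneg z).trans_lt
      (mem_ball_zero_iff.1 hz))) hz ht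

theorem ContinuousOn.comp_ofReal_mul {E : Type*} [TopologicalSpace E] {R : ℝ} {g : ℂ → E}
    (hg : ContinuousOn g (ball 0 R)) {z : ℂ} (hz : z ∈ ball (0:ℂ) R) :
    ContinuousOn (fun t : ℝ => g ((t : ℂ) * z)) (Icc 0 1) :=
  hg.comp (by fun_prop) fun _ ht => ofReal_mul_mem_ball ht hz

section SegmentAverage

variable {E : Type*} [NormedAddCommGroup E] [NormedSpace ℂ E]

noncomputable def segmentAverage (g : ℂ → E) (z : ℂ) : E := ∫ t in (0:ℝ)..1, g ((t : ℂ) * z)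

theorem DifferentiableOn.segmentAverage [CompleteSpace E] {R : ℝ} {g : ℂ → E}
    (hg : DifferentiableOn ℂ g (ball 0 R)) :
    DifferentiableOn ℂ (segmentAverage g) (ball 0 R) := by
  intro z₀ hz₀
  obtain ⟨ρ, hz₀ρ, hρR⟩ := exists_between (mem_ball_zero_iff.1 hz₀)
  have hρ : closedBall (0:ℂ) ρ ⊆ ball 0 R := closedBall_subset_ball hρR
  have hg' : ContinuousOn (_root_.deriv g) (ball 0 R) :=
    (hg.analyticOnNhd isOpen_ball).deriv.continuousOn
  obtain ⟨C, hC⟩ := (isCompact_closedBall (0:ℂ) ρ).exists_bound_of_continuousOn (hg'.mono hρ)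
  have hIoc : Ι (0:ℝ) 1 ⊆ Icc 0 1 := by simp [uIoc_of_le, Ioc_subset_Icc_self]
  have hmem : ∀ t ∈ Ι (0:ℝ) 1, ∀ x ∈ ball (0:ℂ) ρ, (t : ℂ) * x ∈ closedBall 0 ρ :=
    fun t ht x hx => ball_subset_closedBall (ofReal_mul_mem_ball (hIoc ht) hx)
  have hρR' : ball (0:ℂ) ρ ⊆ ball 0 R := ball_subset_ball hρR.le
  have hz₀' : z₀ ∈ ball (0:ℂ) ρ := mem_ball_zero_iff.2 hz₀ρ
  refine (intervalIntegral.hasDerivAt_integral_of_dominated_loc_of_deriv_le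
    (F := fun x t => g ((t : ℂ) * x)) (F' := fun x t => (t : ℂ) • _root_.deriv g ((t : ℂ) * x))
    (bound := fun _ => C) (isOpen_ball.mem_nhds hz₀') ?_ ?_ ?_ ?_ intervalIntegrable_const ?_).2
    |>.differentiableAt.differentiableWithinAt
  · filter_upwards [isOpen_ball.mem_nhds hz₀'] with x hx
    exact ((hg.continuousOn.comp_ofReal_mul (hρR' hx)).mono hIoc).aestronglyMeasurable
      measurableSet_uIoc
  · exact (hg.continuousOn.comp_ofReal_mul hz₀).intervalIntegrable_of_Icc zero_le_one
  · exact ((Complex.continuous_ofReal.continuousOn.smul (hg'.comp_ofReal_mul hz₀)).mono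
      hIoc).aestronglyMeasurable measurableSet_uIoc
  · refine .of_forall fun t ht x hx => ?_
    have ht' := hIoc ht
    rw [norm_smul, Complex.norm_real, Real.norm_of_nonneg ht'.1]
    exact (mul_le_of_le_one_left (norm_nonneg _) ht'.2).trans (hC _ (hmem t ht x hx))
  · refine .of_forall fun t ht x hx => ?_
    have hgx := (hg.differentiableAt (isOpen_ball.mem_nhds (hρ (hmem t ht x hx)))).hasDerivAt
    simpa [Function.comp_def] using hgx.scomp x ((hasDerivAt_id x).const_mul (t : ℂ))

theorem norm_segmentAverage_rpow_le {q R : ℝ} (hq : 1 ≤ q) {g : ℂ → E}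
    (hg : ContinuousOn g (ball 0 R)) {z : ℂ} (hz : z ∈ ball 0 R) :
    ‖segmentAverage g z‖ ^ q ≤ ∫ t in Ioc (0:ℝ) 1, ‖g ((t : ℂ) * z)‖ ^ q := by
  have : IsProbabilityMeasure (volume.restrict (Ioc (0:ℝ) 1)) := ⟨by simp⟩
  have hgz := hg.comp_ofReal_mul hz
  rw [segmentAverage, intervalIntegral.integral_of_le zero_le_one]
  exact norm_integral_rpow_le_integral_norm_rpow hq
    (hgz.integrableOn_Icc.mono_set Ioc_subset_Icc_self)
    ((hgz.norm.rpow_const fun _ _ => Or.inr (zero_le_one.trans hq)).integrableOn_Icc.mono_set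
      Ioc_subset_Icc_self)

end SegmentAverage

section IntegralMeans

open Complex

theorem intMean_nonneg (q : ℝ) (f : ℂ → ℂ) (r : ℝ) : 0 ≤ intMean q f r := by
  unfold intMean
  have : 0 ≤ ∫ θ in (0:ℝ)..(2 * Real.pi), ‖f ((r : ℂ) * exp (θ * I))‖ ^ q :=
    intervalIntegral.integral_nonneg Real.two_pi_pos.le fun _ _ => by positivity
  positivity

theorem intMean_le_iff {q A : ℝ} (hq : 0 < q) (hA : 0 ≤ A) (f : ℂ → ℂ) (r : ℝ) :
    intMean q f r ≤ A ↔
      ∫ θ in (0:ℝ)..(2 * Real.pi), ‖f ((r : ℂ) * exp (θ * I))‖ ^ q ≤ 2 * Real.pi * A ^ q := by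
  have hI : 0 ≤ ∫ θ in (0:ℝ)..(2 * Real.pi), ‖f ((r : ℂ) * exp (θ * I))‖ ^ q :=
    intervalIntegral.integral_nonneg Real.two_pi_pos.le fun _ _ => by positivity
  rw [intMean, one_div, Real.rpow_inv_le_iff_of_pos (by positivity) hA hq,
    inv_mul_le_iff₀ Real.two_pi_pos]

theorem intMean_le_hardyNorm {q r : ℝ} {f : ℂ → ℂ} (hf : BddAbove (meanSet q f))
    (hr : r ∈ Ioo (0:ℝ) 1) : intMean q f r ≤ hardyNorm q f :=
  le_csSup hf (mem_image_of_mem _ hr)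

theorem hardyNorm_nonneg {q : ℝ} {f : ℂ → ℂ} (hf : BddAbove (meanSet q f)) :
    0 ≤ hardyNorm q f :=
  (intMean_nonneg q f _).trans (intMean_le_hardyNorm hf (r := 1 / 2) (by norm_num))

theorem intMean_segmentAverage_le_hardyNorm {q r : ℝ} (hq : 1 ≤ q) {g : ℂ → ℂ}
    (hg : ContinuousOn g (ball 0 1)) (hb : BddAbove (meanSet q g)) (hr : r ∈ Ioo (0:ℝ) 1) :
    intMean q (segmentAverage g) r ≤ hardyNorm q g := by
  have hq0 : 0 < q := zero_lt_one.trans_le hq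
  have h2π := Real.two_pi_pos
  set A := hardyNorm q g
  let Φ : ℝ → ℝ → ℝ := fun θ t => ‖g ((t : ℂ) * (r * exp (θ * I)))‖ ^ q
  have hz (θ : ℝ) : (r : ℂ) * exp (θ * I) ∈ ball (0:ℂ) 1 := by
    simp [norm_exp_ofReal_mul_I, abs_of_pos hr.1, hr.2]
  have hΦ : Integrable (Function.uncurry Φ)
      ((volume.restrict (Ioc 0 (2 * Real.pi))).prod (volume.restrict (Ioc 0 1))) := by
    refine integrable_prod_restrict_Ioc_of_continuousOn ?_
    refine ((hg.comp (by fun_prop) ?_).norm).rpow_const fun _ _ => Or.inr hq0.le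
    rintro ⟨θ, t⟩ ⟨-, ht⟩
    exact ofReal_mul_mem_ball ht (hz θ)
  have hslice : ∀ t ∈ Ioc (0:ℝ) 1, ∫ θ in Ioc 0 (2 * Real.pi), Φ θ t ≤ 2 * Real.pi * A ^ q := by
    intro t ht
    have hs : t * r ∈ Ioo (0:ℝ) 1 :=
      ⟨mul_pos ht.1 hr.1, mul_lt_one_of_nonneg_of_lt_one_right ht.2 hr.1.le hr.2⟩
    have := (intMean_le_iff hq0 (hardyNorm_nonneg hb) g _).1 (intMean_le_hardyNorm hb hs)
    simpa only [intervalIntegral.integral_of_le h2π.le, ofReal_mul, mul_assoc] using this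
  rw [intMean_le_iff hq0 (hardyNorm_nonneg hb), intervalIntegral.integral_of_le h2π.le]
  calc ∫ θ in Ioc 0 (2 * Real.pi), ‖segmentAverage g (r * exp (θ * I))‖ ^ q
      ≤ ∫ θ in Ioc 0 (2 * Real.pi), ∫ t in Ioc 0 1, Φ θ t :=
        integral_mono_of_nonneg (.of_forall fun _ => by positivity) hΦ.integral_prod_left
          (.of_forall fun θ => norm_segmentAverage_rpow_le hq hg (hz θ))
    _ = ∫ t in Ioc 0 1, ∫ θ in Ioc 0 (2 * Real.pi), Φ θ t := integral_integral_swap hΦ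
    _ ≤ ∫ t in Ioc (0:ℝ) 1, 2 * Real.pi * A ^ q :=
        setIntegral_mono_on hΦ.integral_prod_right (integrableOn_const (by simp))
          measurableSet_Ioc hslice
    _ = 2 * Real.pi * A ^ q := by simp

end IntegralMeans

theorem primitive_mean_bound
    (q : ℝ) (hq : 1 ≤ q) (g : ℂ → ℂ) (hg : MemHq q g)
    (G : ℂ → ℂ) (hG : ∀ z : ℂ, G z = ∫ t in (0:ℝ)..1, g ((t : ℂ) * z)) :
    MemHq q G ∧ hardyNorm q G ≤ hardyNorm q g := by
  obtain rfl : G = segmentAverage g := funext hG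
  have hmean : ∀ x ∈ meanSet q (segmentAverage g), x ≤ hardyNorm q g := by
    rintro x ⟨r, hr, rfl⟩
    exact intMean_segmentAverage_le_hardyNorm hq hg.1.continuousOn hg.2 hr
  exact ⟨⟨hg.1.segmentAverage, hardyNorm q g, hmean⟩,
    csSup_le ((nonempty_Ioo.2 zero_lt_one).image _) hmean⟩
end
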